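/- Let n > 3 and label the vertices of a convex n-gon by ℤ/nℤ. Let A be a set of chords such that: (1) for every three distinct vertices, if one of the three chords spanned by them lies in A then at least two of them do; (2) every side {i, i+1} lies in A; and (3) at least one short diagonal {i, i+2} lies in A. Then there exist n−3 pairwise noncrossing diagonals all lying in A (i.e., the polygon admits a triangulation all of whose diagonals are in A). -/

import Mathlib

/-- `sbtw n a c b`: the vertex `c` lies strictly between `a` and `b` in the
counterclockwise cyclic order on the vertices `ZMod n` of a convex `n`-gon. -/
def sbtw (n : ℕ) (a c b : ZMod n) : Prop :=
  0 < (c - a).val ∧ (c - a).val < (b - a).val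

/-- A side of the convex `n`-gon: a chord of the form `{i, i+1}`. -/
def IsSide (n : ℕ) (s : Finset (ZMod n)) : Prop :=
  ∃ i : ZMod n, s = {i, i + 1}

/-- A diagonal: a chord (2-element set of vertices) that is not a side. -/
def IsDiag (n : ℕ) (s : Finset (ZMod n)) : Prop :=
  s.card = 2 ∧ ¬ IsSide n s

/-- Two chords cross if exactly one endpoint of one of them lies strictly between the
two endpoints of the other in the cyclic order: one endpoint on each of the two open
arcs determined by the other chord. -/
def Cross (n : ℕ) (s t : Finset (ZMod n)) : Prop :=
  ∃ a b c d : ZMod n, s = {a, b} ∧ t = {c, d} ∧ sbtw n a c b ∧ sbtw n b d a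

/-!
Call two vertices linked if they are equal or span a non-admissible chord. Condition (1) says
exactly that being linked is transitive, so a chord is admissible iff its endpoints lie in
different classes of an equivalence relation. By (2) adjacent vertices lie in different
classes, and then (3) provides three classes.

Triangulate by cutting ears. In a polygon with at least four vertices, adjacent vertices in
different classes and at least three classes, some vertex has its two neighbours in different
classes and can be removed so that three classes remain. The chord joining its neighbours is
admissible and crosses no chord of the smaller polygon, which is triangulated by induction.
-/

lemma Finset.pair_eq_pair_iff {α : Type*} [DecidableEq α] {a b c d : α} :
    ({a, b} : Finset α) = {c, d} ↔ a = c ∧ b = d ∨ a = d ∧ b = c := by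
  rw [← Finset.coe_inj, Finset.coe_pair, Finset.coe_pair, Set.pair_eq_pair_iff]

lemma ZMod.val_sub_eq_ite {n : ℕ} [NeZero n] (a b : ZMod n) :
    (a - b).val = if b.val ≤ a.val then a.val - b.val else a.val + n - b.val := by
  split_ifs with h
  · exact ZMod.val_sub h
  · have hba : b - a ≠ 0 := by
      rw [sub_ne_zero]
      rintro rfl
      exact h le_rfl
    rw [← neg_sub, ZMod.neg_val, if_neg hba, ZMod.val_sub (by omega)]
    have := ZMod.val_lt b
    omega

namespace AdmissibleTriangulation

/-- `Cyc a c b`: going up cyclically from `a`, one meets `c` strictly before `b`. -/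
def Cyc (a c b : ℕ) : Prop :=
  a < c ∧ c < b ∨ c < b ∧ b < a ∨ b < a ∧ a < c

def Interleaved (a b c d : ℕ) : Prop :=
  Cyc a c b ∧ Cyc b d a ∨ Cyc a d b ∧ Cyc b c a

def cycSucc (k i : ℕ) : ℕ := if i + 1 = k then 0 else i + 1

def cycPred (k i : ℕ) : ℕ := if i = 0 then k - 1 else i - 1

/-- `Fin.succAbove` on `ℕ`. -/
def skip (j i : ℕ) : ℕ := if i < j then i else i + 1

lemma cycSucc_lt {k i : ℕ} (hi : i < k) : cycSucc k i < k := by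
  unfold cycSucc
  split_ifs <;> omega

lemma cycPred_lt {k i : ℕ} (hi : i < k) : cycPred k i < k := by
  unfold cycPred
  split_ifs <;> omega

lemma cycSucc_ne {k : ℕ} (hk : 2 ≤ k) (i : ℕ) : cycSucc k i ≠ i := by
  unfold cycSucc
  split_ifs <;> omega

lemma cycSucc_cycSucc_ne {k : ℕ} (hk : 3 ≤ k) (i : ℕ) : cycSucc k (cycSucc k i) ≠ i := by
  unfold cycSucc
  split_ifs <;> first | contradiction | omega

lemma cyc_iff_of_strictMono {p : ℕ → ℕ} (hp : StrictMono p) {a b c : ℕ} :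
    Cyc (p a) (p c) (p b) ↔ Cyc a c b := by
  simp only [Cyc, hp.lt_iff_lt]

lemma strictMono_skip (j : ℕ) : StrictMono (skip j) := by
  intro a b h
  unfold skip
  split_ifs <;> omega

lemma skip_ne (j i : ℕ) : skip j i ≠ j := by
  unfold skip
  split_ifs <;> omega

lemma skip_lt {k j i : ℕ} (hi : i < k - 1) : skip j i < k := by
  unfold skip
  split_ifs <;> omega

lemma exists_skip_eq {k j x : ℕ} (hj : j < k) (hx : x < k) (hxj : x ≠ j) :
    ∃ y < k - 1, skip j y = x := by
  by_cases h : x < j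
  · exact ⟨x, by omega, if_pos h⟩
  · exact ⟨x - 1, by omega, by unfold skip; split_ifs <;> omega⟩

/-- Deleting the vertex at position `j` of a `k`-gon merges the two sides at `j` into the chord
`{cycPred k j, cycSucc k j}` and keeps all other sides. -/
lemma skip_cycSucc {k j i : ℕ} (hj : j < k) (hi : i < k - 1) :
    skip j (cycSucc (k - 1) i) = cycSucc k (skip j i) ∨
      skip j i = cycPred k j ∧ skip j (cycSucc (k - 1) i) = cycSucc k j := by
  unfold skip cycSucc cycPred
  split_ifs <;> omega

/-- The open arc from `cycPred k j` to `cycSucc k j` contains no position but `j`. -/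
lemma not_interleaved_ear {k j a b : ℕ} (hj : j < k) (ha : a < k) (hb : b < k)
    (haj : a ≠ j) (hbj : b ≠ j) :
    ¬Interleaved a b (cycPred k j) (cycSucc k j) ∧
      ¬Interleaved (cycPred k j) (cycSucc k j) a b := by
  simp only [Interleaved, Cyc, cycPred, cycSucc]
  split_ifs <;> omega

/-- After deleting `j`, the chord `{cycPred k j, cycSucc k j}` is a side, not a diagonal. -/
lemma skip_ne_ear {k j x y : ℕ} (hxy : x + 2 ≤ y) (hy : y < k - 1)
    (hxy' : ¬(x = 0 ∧ y + 1 = k - 1)) :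
    ¬(skip j x = cycPred k j ∧ skip j y = cycSucc k j ∨
      skip j x = cycSucc k j ∧ skip j y = cycPred k j) := by
  unfold skip cycPred cycSucc
  split_ifs <;> omega

lemma sbtw_iff_cyc {n : ℕ} [NeZero n] (a c b : ZMod n) :
    sbtw n a c b ↔ Cyc a.val c.val b.val := by
  have ha := ZMod.val_lt a
  have hb := ZMod.val_lt b
  have hc := ZMod.val_lt c
  simp only [_root_.sbtw, Cyc, ZMod.val_sub_eq_ite]
  constructor <;> intro h <;> split_ifs at * <;> omega

lemma not_sbtw_add_one {n : ℕ} (i c : ZMod n) : ¬sbtw n i c (i + 1) := by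
  rintro ⟨h0, h1⟩
  rw [add_sub_cancel_left, ZMod.val_one_eq_one_mod] at h1
  have := Nat.mod_le 1 n
  omega

lemma not_cross_self {n : ℕ} (s : Finset (ZMod n)) : ¬Cross n s s := by
  rintro ⟨a, b, c, d, rfl, hs, ⟨h0, h1⟩, -⟩
  have hc : c ∈ ({a, b} : Finset (ZMod n)) := hs ▸ Finset.mem_insert_self c {d}
  rcases Finset.mem_insert.1 hc with rfl | hc
  · simp at h0
  · rw [Finset.mem_singleton.1 hc] at h1
    exact lt_irrefl _ h1

section Classes

variable {n : ℕ} (A : Set (Finset (ZMod n)))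

def Linked (x y : ZMod n) : Prop := x = y ∨ {x, y} ∉ A

lemma linked_equivalence
    (h1 : ∀ i j k : ZMod n, i ≠ j → j ≠ k → i ≠ k →
      ({i, j} ∈ A ∨ {j, k} ∈ A ∨ {i, k} ∈ A) →
      (({i, j} ∈ A ∧ {j, k} ∈ A) ∨ ({j, k} ∈ A ∧ {i, k} ∈ A) ∨
        ({i, j} ∈ A ∧ {i, k} ∈ A))) :
    Equivalence (Linked A) where
  refl _ := Or.inl rfl
  symm := by
    rintro x y (rfl | h)
    · exact Or.inl rfl
    · exact Or.inr (by rwa [Finset.pair_comm])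
  trans := by
    rintro x y z (rfl | hxy) (rfl | hyz)
    · exact Or.inl rfl
    · exact Or.inr hyz
    · exact Or.inr hxy
    by_cases hxz : x = z
    · exact Or.inl hxz
    refine Or.inr fun hA => ?_
    have hx : x ≠ y := by rintro rfl; exact hyz hA
    have hz : y ≠ z := by rintro rfl; exact hxy hA
    rcases h1 x y z hx hz hxz (Or.inr (Or.inr hA)) with ⟨h, -⟩ | ⟨h, -⟩ | ⟨h, -⟩
    · exact hxy h
    · exact hyz h
    · exact hxy h

def Rainbow (a b c : ZMod n) : Prop := ¬Linked A a b ∧ ¬Linked A b c ∧ ¬Linked A a c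

variable {A}

lemma mem_of_not_linked {x y : ZMod n} (h : ¬Linked A x y) : {x, y} ∈ A :=
  not_not.1 fun h' => h (Or.inr h')

lemma Rainbow.rotate (hA : Equivalence (Linked A)) {a b c : ZMod n} (h : Rainbow A a b c) :
    Rainbow A b c a :=
  ⟨h.2.1, fun h' => h.2.2 (hA.symm h'), fun h' => h.1 (hA.symm h')⟩

lemma Rainbow.of_linked (hA : Equivalence (Linked A)) {a a' b c : ZMod n}
    (h : Rainbow A a b c) (ha : Linked A a a') : Rainbow A a' b c :=
  ⟨fun h' => h.1 (hA.trans ha h'), h.2.1, fun h' => h.2.2 (hA.trans ha h')⟩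

end Classes

/-- The polygon with vertices `pos 0 < pos 1 < ⋯ < pos (size - 1)` among the vertices `ZMod n`
of the `n`-gon; vertices are referred to by their position `i < size`, and the values of `pos`
beyond `size` play no role. -/
structure InscribedPolygon (n : ℕ) where
  size : ℕ
  pos : ℕ → ℕ
  strictMono : StrictMono pos
  lt : ∀ i < size, pos i < n

namespace InscribedPolygon

variable {n : ℕ}

section Definitions

variable (P : InscribedPolygon n) (A : Set (Finset (ZMod n)))

def vertex (i : ℕ) : ZMod n := (P.pos i : ZMod n)

def erase (j : ℕ) : InscribedPolygon n where
  size := P.size - 1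
  pos := P.pos ∘ skip j
  strictMono := P.strictMono.comp (strictMono_skip j)
  lt _ hi := P.lt _ (skip_lt hi)

variable (n) in
def full : InscribedPolygon n := ⟨n, id, strictMono_id, fun _ h => h⟩

def IsDiagonal (s : Finset (ZMod n)) : Prop :=
  ∃ x y, x + 2 ≤ y ∧ y < P.size ∧ ¬(x = 0 ∧ y + 1 = P.size) ∧ s = {P.vertex x, P.vertex y}

def ear (j : ℕ) : Finset (ZMod n) := {P.vertex (cycPred P.size j), P.vertex (cycSucc P.size j)}

def ProperSides : Prop :=
  ∀ i < P.size, ¬Linked A (P.vertex i) (P.vertex (cycSucc P.size i))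

def HasThreeClasses : Prop :=
  ∃ x < P.size, ∃ y < P.size, ∃ z < P.size, Rainbow A (P.vertex x) (P.vertex y) (P.vertex z)

@[simp] lemma erase_size (j : ℕ) : (P.erase j).size = P.size - 1 := rfl

@[simp] lemma erase_vertex (j i : ℕ) : (P.erase j).vertex i = P.vertex (skip j i) := rfl

@[simp] lemma full_size : (full n).size = n := rfl

@[simp] lemma full_vertex (i : ℕ) : (full n).vertex i = (i : ZMod n) := rfl

end Definitions

variable {P : InscribedPolygon n} {A : Set (Finset (ZMod n))}

lemma val_vertex {i : ℕ} (hi : i < P.size) : (P.vertex i).val = P.pos i :=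
  ZMod.val_natCast_of_lt (P.lt i hi)

lemma vertex_injOn {i j : ℕ} (hi : i < P.size) (hj : j < P.size)
    (h : P.vertex i = P.vertex j) : i = j :=
  P.strictMono.injective (by rw [← val_vertex hi, h, val_vertex hj])

lemma pair_vertex_eq_iff {a b c d : ℕ} (ha : a < P.size) (hb : b < P.size) (hc : c < P.size)
    (hd : d < P.size) :
    ({P.vertex a, P.vertex b} : Finset (ZMod n)) = {P.vertex c, P.vertex d} ↔
      a = c ∧ b = d ∨ a = d ∧ b = c := by
  rw [Finset.pair_eq_pair_iff]
  constructor
  · rintro (⟨h, h'⟩ | ⟨h, h'⟩)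
    · exact Or.inl ⟨vertex_injOn ha hc h, vertex_injOn hb hd h'⟩
    · exact Or.inr ⟨vertex_injOn ha hd h, vertex_injOn hb hc h'⟩
  · rintro (⟨rfl, rfl⟩ | ⟨rfl, rfl⟩) <;> simp

lemma ne_of_not_linked {x y : ℕ} (h : ¬Linked A (P.vertex x) (P.vertex y)) : x ≠ y := by
  rintro rfl
  exact h (Or.inl rfl)

lemma IsDiagonal.of_erase {j : ℕ} {s : Finset (ZMod n)} (h : (P.erase j).IsDiagonal s) :
    P.IsDiagonal s := by
  obtain ⟨x, y, hxy, hy, hxy', rfl⟩ := h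
  simp only [erase_size] at hy hxy'
  refine ⟨skip j x, skip j y, ?_, skip_lt hy, fun ⟨h0, h1⟩ => ?_, rfl⟩ <;> unfold skip at * <;>
    split_ifs at * <;> omega

lemma isDiagonal_ear (hk : 4 ≤ P.size) {j : ℕ} (hj : j < P.size) : P.IsDiagonal (P.ear j) := by
  unfold ear cycPred cycSucc
  split_ifs with h0 h1 h1
  · omega
  · subst h0
    exact ⟨1, P.size - 1, by omega, by omega, by omega, Finset.pair_comm _ _⟩
  · exact ⟨0, j - 1, by omega, by omega, by omega, Finset.pair_comm _ _⟩
  · exact ⟨j - 1, j + 1, by omega, by omega, by omega, rfl⟩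

lemma IsDiagonal.ne_ear_of_erase {j : ℕ} (hj : j < P.size) {s : Finset (ZMod n)}
    (hs : (P.erase j).IsDiagonal s) : s ≠ P.ear j := by
  obtain ⟨x, y, hxy, hy, hxy', rfl⟩ := hs
  simp only [erase_size] at hy hxy'
  rw [ear, erase_vertex, erase_vertex, Ne,
    pair_vertex_eq_iff (skip_lt (by omega)) (skip_lt hy) (cycPred_lt hj) (cycSucc_lt hj)]
  exact skip_ne_ear hxy hy hxy'

lemma ProperSides.erase (hP : P.ProperSides A) {j : ℕ} (hj : j < P.size)
    (hear : ¬Linked A (P.vertex (cycPred P.size j)) (P.vertex (cycSucc P.size j))) :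
    (P.erase j).ProperSides A := by
  intro i hi
  simp only [erase_size, erase_vertex] at hi ⊢
  rcases skip_cycSucc hj hi with h | ⟨h, h'⟩
  · rw [h]
    exact hP _ (skip_lt hi)
  · rwa [h, h']

lemma hasThreeClasses_erase_of_rainbow {j x y z : ℕ} (hj : j < P.size) (hx : x < P.size)
    (hy : y < P.size) (hz : z < P.size) (hxj : x ≠ j) (hyj : y ≠ j) (hzj : z ≠ j)
    (h : Rainbow A (P.vertex x) (P.vertex y) (P.vertex z)) : (P.erase j).HasThreeClasses A := by
  obtain ⟨x', hx', rfl⟩ := exists_skip_eq hj hx hxj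
  obtain ⟨y', hy', rfl⟩ := exists_skip_eq hj hy hyj
  obtain ⟨z', hz', rfl⟩ := exists_skip_eq hj hz hzj
  exact ⟨x', hx', y', hy', z', hz', h⟩

/-- If no ear chord were admissible, following the short diagonals in steps of two would put every
vertex in the class of vertex `0` or of vertex `1`. -/
lemma exists_ear (hA : Equivalence (Linked A)) (hP : P.HasThreeClasses A) :
    ∃ j < P.size, ¬Linked A (P.vertex (cycPred P.size j)) (P.vertex (cycSucc P.size j)) := by
  by_contra! hno
  have hchain : ∀ i < P.size,
      Linked A (P.vertex 0) (P.vertex i) ∨ Linked A (P.vertex 1) (P.vertex i) := by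
    intro i
    induction i using Nat.strong_induction_on with
    | _ i ih =>
      intro hi
      match i with
      | 0 => exact Or.inl (hA.refl _)
      | 1 => exact Or.inr (hA.refl _)
      | i + 2 =>
        have hpred : cycPred P.size (i + 1) = i := by simp [cycPred]
        have hsucc : cycSucc P.size (i + 1) = i + 2 := by unfold cycSucc; split_ifs <;> omega
        have hstep := hno (i + 1) (by omega)
        rw [hpred, hsucc] at hstep
        exact (ih i (by omega) (by omega)).imp (hA.trans · hstep) (hA.trans · hstep)
  obtain ⟨x, hx, y, hy, z, hz, hxy, hyz, hxz⟩ := hP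
  have hsame {c a b : ZMod n} (ha : Linked A c a) (hb : Linked A c b) : Linked A a b :=
    hA.trans (hA.symm ha) hb
  rcases hchain x hx with h₁ | h₁ <;> rcases hchain y hy with h₂ | h₂ <;>
    rcases hchain z hz with h₃ | h₃
  all_goals first
    | exact hxy (hsame h₁ h₂)
    | exact hyz (hsame h₂ h₃)
    | exact hxz (hsame h₁ h₃)

/-- If some vertex `a` is alone in its class, cut the ear at the vertex after `a`; otherwise any
admissible ear will do, since each vertex of a rainbow triangle can be traded for another vertex
of its class. -/
lemma exists_good_ear (hA : Equivalence (Linked A)) (hk : 4 ≤ P.size) (hsides : P.ProperSides A)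
    (hP : P.HasThreeClasses A) :
    ∃ j < P.size, ¬Linked A (P.vertex (cycPred P.size j)) (P.vertex (cycSucc P.size j)) ∧
      (P.erase j).HasThreeClasses A := by
  by_cases hsingle : ∃ a < P.size, ∀ l < P.size, l ≠ a → ¬Linked A (P.vertex a) (P.vertex l)
  · obtain ⟨a, ha, hsingle⟩ := hsingle
    have hpos : cycPred P.size (cycSucc P.size a) = a ∧
        cycSucc P.size (cycSucc P.size a) ≠ a ∧
        cycSucc P.size (cycSucc P.size (cycSucc P.size a)) ≠ a ∧
        a ≠ cycSucc P.size a ∧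
        cycSucc P.size (cycSucc P.size a) ≠ cycSucc P.size a ∧
        cycSucc P.size (cycSucc P.size (cycSucc P.size a)) ≠ cycSucc P.size a := by
      unfold cycSucc cycPred
      split_ifs <;> first | contradiction | omega
    set b := cycSucc P.size a
    set c := cycSucc P.size b
    set d := cycSucc P.size c
    obtain ⟨hpred, hca, hda, hab, hcb, hdb⟩ := hpos
    have hb : b < P.size := cycSucc_lt ha
    have hc : c < P.size := cycSucc_lt hb
    have hd : d < P.size := cycSucc_lt hc
    refine ⟨b, hb, ?_, hasThreeClasses_erase_of_rainbow hb ha hc hd hab hcb hdb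
      ⟨hsingle c hc hca, hsides c hc, hsingle d hd hda⟩⟩
    rw [hpred]
    exact hsingle c hc hca
  push Not at hsingle
  obtain ⟨j, hj, hear⟩ := exists_ear hA hP
  refine ⟨j, hj, hear, ?_⟩
  have hreplace : ∀ x < P.size, ∀ y < P.size, ∀ z < P.size, y ≠ j → z ≠ j →
      Rainbow A (P.vertex x) (P.vertex y) (P.vertex z) → (P.erase j).HasThreeClasses A := by
    intro x hx y hy z hz hyj hzj h
    by_cases hxj : x = j
    · obtain ⟨x', hx', hx'x, hlink⟩ := hsingle x hx
      exact hasThreeClasses_erase_of_rainbow hj hx' hy hz (hxj ▸ hx'x) hyj hzj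
        (h.of_linked hA hlink)
    · exact hasThreeClasses_erase_of_rainbow hj hx hy hz hxj hyj hzj h
  obtain ⟨x, hx, y, hy, z, hz, h⟩ := hP
  have hxy := ne_of_not_linked h.1
  have hyz := ne_of_not_linked h.2.1
  have hxz := ne_of_not_linked h.2.2
  by_cases hyj : y = j
  · exact hreplace y hy z hz x hx (by omega) (by omega) (h.rotate hA)
  by_cases hzj : z = j
  · exact hreplace z hz x hx y hy (by omega) (by omega) ((h.rotate hA).rotate hA)
  exact hreplace x hx y hy z hz hyj hzj h

lemma natCast_cycSucc (i : ℕ) : ((cycSucc n i : ℕ) : ZMod n) = i + 1 := by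
  unfold cycSucc
  split_ifs with h
  · rw [Nat.cast_zero, ← Nat.cast_add_one, h, ZMod.natCast_self]
  · push_cast
    rfl

lemma full_properSides (hn : 2 ≤ n) (h2 : ∀ i : ZMod n, {i, i + 1} ∈ A) :
    (full n).ProperSides A := by
  intro i hi
  simp only [full_size] at hi ⊢
  rintro (h | h)
  · exact cycSucc_ne hn i ((full n).vertex_injOn hi (cycSucc_lt hi) h).symm
  · exact h (by rw [full_vertex, full_vertex, natCast_cycSucc]; exact h2 _)

section CyclicOrder

variable [NeZero n]

lemma sbtw_vertex_iff {a b c : ℕ} (ha : a < P.size) (hb : b < P.size) (hc : c < P.size) :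
    sbtw n (P.vertex a) (P.vertex c) (P.vertex b) ↔ Cyc a c b := by
  rw [sbtw_iff_cyc, val_vertex ha, val_vertex hb, val_vertex hc,
    cyc_iff_of_strictMono P.strictMono]

lemma interleaved_of_cross {a b c d : ℕ} (ha : a < P.size) (hb : b < P.size) (hc : c < P.size)
    (hd : d < P.size) (h : Cross n {P.vertex a, P.vertex b} {P.vertex c, P.vertex d}) :
    Interleaved a b c d := by
  obtain ⟨a', b', c', d', hs, ht, h1, h2⟩ := h
  rw [eq_comm, Finset.pair_eq_pair_iff] at hs ht
  rcases hs with ⟨rfl, rfl⟩ | ⟨rfl, rfl⟩ <;> rcases ht with ⟨rfl, rfl⟩ | ⟨rfl, rfl⟩ <;>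
    simp only [sbtw_vertex_iff, *] at h1 h2 <;>
    simp only [Interleaved, *, and_true, true_or, or_true]

lemma IsDiagonal.isDiag {s : Finset (ZMod n)} (h : P.IsDiagonal s) : IsDiag n s := by
  obtain ⟨x, y, hxy, hy, hxy', rfl⟩ := h
  refine ⟨Finset.card_pair fun h => by have := vertex_injOn (by omega) hy h; omega, ?_⟩
  rintro ⟨i, hi⟩
  rcases Finset.pair_eq_pair_iff.1 hi with ⟨hx, hy'⟩ | ⟨hx, hy'⟩
  · refine not_sbtw_add_one i (P.vertex (x + 1)) ?_
    rw [← hy', ← hx, sbtw_vertex_iff (by omega) hy (by omega)]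
    simp only [Cyc]
    omega
  · refine not_sbtw_add_one i (P.vertex (cycSucc P.size y)) ?_
    rw [← hx, ← hy', sbtw_vertex_iff hy (by omega) (cycSucc_lt hy)]
    simp only [Cyc, cycSucc]
    split_ifs <;> omega

lemma not_cross_ear {j : ℕ} (hj : j < P.size) {s : Finset (ZMod n)}
    (hs : (P.erase j).IsDiagonal s) : ¬Cross n s (P.ear j) ∧ ¬Cross n (P.ear j) s := by
  obtain ⟨x, y, hxy, hy, -, rfl⟩ := hs
  simp only [erase_size] at hy
  have hx' : skip j x < P.size := skip_lt (by omega)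
  have hy' : skip j y < P.size := skip_lt hy
  obtain ⟨h, h'⟩ := not_interleaved_ear hj hx' hy' (skip_ne j x) (skip_ne j y)
  exact ⟨fun hc => h (interleaved_of_cross hx' hy' (cycPred_lt hj) (cycSucc_lt hj) hc),
    fun hc => h' (interleaved_of_cross (cycPred_lt hj) (cycSucc_lt hj) hx' hy' hc)⟩

theorem exists_triangulation (hA : Equivalence (Linked A)) (P : InscribedPolygon n)
    (hk : 3 ≤ P.size) (hsides : P.ProperSides A) (hP : P.HasThreeClasses A) :
    ∃ D : Finset (Finset (ZMod n)), D.card = P.size - 3 ∧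
      (∀ s ∈ D, P.IsDiagonal s ∧ s ∈ A) ∧ ∀ s ∈ D, ∀ t ∈ D, ¬Cross n s t := by
  generalize hsize : P.size = k at hk
  induction k, hk using Nat.le_induction generalizing P with
  | base => exact ⟨∅, by simp, by simp, by simp⟩
  | succ k hk3 ih =>
    obtain ⟨j, hj, hear, hP'⟩ := exists_good_ear hA (by omega) hsides hP
    obtain ⟨D, hcard, hdiag, hcross⟩ :=
      ih (P.erase j) (hsides.erase hj hear) hP' (by simp [hsize])
    have hearD : P.ear j ∉ D := fun h => (hdiag _ h).1.ne_ear_of_erase hj rfl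
    refine ⟨insert (P.ear j) D, ?_, ?_, ?_⟩
    · rw [Finset.card_insert_of_notMem hearD, hcard]
      omega
    · simp only [Finset.forall_mem_insert]
      exact ⟨⟨isDiagonal_ear (by omega) hj, mem_of_not_linked hear⟩,
        fun s hs => ⟨(hdiag s hs).1.of_erase, (hdiag s hs).2⟩⟩
    · simp only [Finset.forall_mem_insert]
      refine ⟨⟨not_cross_self _, fun t ht => (not_cross_ear hj (hdiag t ht).1).2⟩,
        fun s hs => ⟨(not_cross_ear hj (hdiag s hs).1).1, hcross s hs⟩⟩

lemma full_hasThreeClasses (hn : 3 ≤ n) (hsides : (full n).ProperSides A)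
    (h3 : ∃ i : ZMod n, {i, i + 2} ∈ A) : (full n).HasThreeClasses A := by
  obtain ⟨i, hi⟩ := h3
  have ha : i.val < n := ZMod.val_lt i
  have hb := cycSucc_lt ha
  have hc := cycSucc_lt hb
  refine ⟨i.val, ha, _, hb, _, hc, hsides _ ha, hsides _ hb, ?_⟩
  rintro (h | h)
  · exact cycSucc_cycSucc_ne hn _ ((full n).vertex_injOn ha hc h).symm
  · refine h ?_
    rw [full_vertex, full_vertex, natCast_cycSucc, natCast_cycSucc, ZMod.natCast_zmod_val,
      add_assoc, one_add_one_eq_two]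
    exact hi

end CyclicOrder

end InscribedPolygon

end AdmissibleTriangulation

/-- Let `n > 3` and let `A` be a set of chords of a convex `n`-gon with vertices
`ZMod n` such that: (1) for every three distinct vertices, if one of the three chords
they span lies in `A` then at least two of them do; (2) every side lies in `A`; and
(3) at least one short diagonal `{i, i+2}` lies in `A`.  Then there exist `n − 3`
pairwise noncrossing diagonals all lying in `A`, i.e. the polygon admits a
triangulation all of whose diagonals are admissible. -/
theorem admissible_triangulation_of_polygon
    (n : ℕ) (hn : 3 < n) (A : Set (Finset (ZMod n)))
    (h1 : ∀ i j k : ZMod n, i ≠ j → j ≠ k → i ≠ k →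
      ({i, j} ∈ A ∨ {j, k} ∈ A ∨ {i, k} ∈ A) →
      (({i, j} ∈ A ∧ {j, k} ∈ A) ∨ ({j, k} ∈ A ∧ {i, k} ∈ A) ∨
        ({i, j} ∈ A ∧ {i, k} ∈ A)))
    (h2 : ∀ i : ZMod n, {i, i + 1} ∈ A)
    (h3 : ∃ i : ZMod n, {i, i + 2} ∈ A) :
    ∃ D : Finset (Finset (ZMod n)), D.card = n - 3 ∧
      (∀ s ∈ D, IsDiag n s ∧ s ∈ A) ∧
      (∀ s ∈ D, ∀ t ∈ D, ¬ Cross n s t) := by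
  have : NeZero n := ⟨by omega⟩
  open AdmissibleTriangulation InscribedPolygon in
  obtain ⟨D, hcard, hD, hcross⟩ :=
    have hsides := full_properSides (A := A) (by omega) h2
    exists_triangulation (linked_equivalence A h1) (full n) (by simp only [full_size]; omega)
      hsides (full_hasThreeClasses (by omega) hsides h3)
  exact ⟨D, hcard, fun s hs => ⟨(hD s hs).1.isDiag, (hD s hs).2⟩, hcross⟩
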